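/- arXiv:2105.05987 — 4 statements merged into one kernel-verified Lean document; each statement's English description precedes it below -/
import Mathlib

section
/- Let C be a monotonically growing temporal cycle and let (p_1, p_2) be any strategy profile with p_1 ≠ p_2. In the final coloring of the two-player temporal diffusion game Diff(C, 2), no vertex remains uncolored and at most two vertices are colored gray. -/
open Finset

/-- A temporal graph on vertex set `{1, …, n}` with layers `E 1, …, E tau`. -/
structure TemporalGraph where
  n : ℕ
  tau : ℕ
  htau : 1 ≤ tau
  E : ℕ → Finset (Sym2 ℕ)

namespace TemporalGraph

/-- The vertex set `[n] = {1, …, n}`. -/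
def V (G : TemporalGraph) : Finset ℕ := Finset.Icc 1 G.n

/-- The underlying edge set `⋃_{t=1}^τ E_t`. -/
def underlying (G : TemporalGraph) : Finset (Sym2 ℕ) := (Finset.Icc 1 G.tau).biUnion G.E

/-- The layer used at time `t ≥ 1`: `E t` for `t ≤ τ`, repeating `E τ` afterwards. -/
def layer (G : TemporalGraph) (t : ℕ) : Finset (Sym2 ℕ) := if t ≤ G.tau then G.E t else G.E G.tau

/-- Edges of the path `1 – 2 – ⋯ – n`. -/
def pathEdges (n : ℕ) : Finset (Sym2 ℕ) := (Finset.Icc 1 (n - 1)).image (fun i => s(i, i + 1))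

/-- Edges of the cycle on `[n]`: the path edges together with `{n, 1}`. -/
def cycleEdges (n : ℕ) : Finset (Sym2 ℕ) := insert s(n, 1) (pathEdges n)

/-- A temporal path of size `n`: the underlying graph is the path `1 – 2 – ⋯ – n`. -/
def IsPath (G : TemporalGraph) : Prop := 2 ≤ G.n ∧ G.underlying = pathEdges G.n

/-- A temporal cycle of size `n`: the underlying graph is the cycle on `[n]`. -/
def IsCycle (G : TemporalGraph) : Prop := 3 ≤ G.n ∧ G.underlying = cycleEdges G.n

/-- The underlying simple graph of a temporal graph. -/
def underlyingGraph (G : TemporalGraph) : SimpleGraph ℕ where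
  Adj u v := u ≠ v ∧ s(u, v) ∈ G.underlying
  symm := by
    constructor
    intro u v h
    refine ⟨h.1.symm, ?_⟩
    rw [Sym2.eq_swap]
    exact h.2
  loopless := ⟨fun v h => h.1 rfl⟩

/-- A temporal linear forest: all edges are loopless edges on the vertex set `[n]`,
and every connected component of the underlying graph is a path (equivalently, the
underlying graph is acyclic and every vertex lies on at most two edges). -/
def IsLinearForest (G : TemporalGraph) : Prop :=
  (∀ e ∈ G.underlying, ¬ e.IsDiag ∧ ∀ x ∈ e, x ∈ G.V) ∧
  G.underlyingGraph.IsAcyclic ∧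
  ∀ v : ℕ, (G.underlying.filter (fun e => v ∈ e)).card ≤ 2

/-- Superset temporal graph: the last layer equals the underlying graph. -/
def Superset (G : TemporalGraph) : Prop := G.E G.tau = G.underlying

/-- Monotonically growing: no edge disappears over time. -/
def Growing (G : TemporalGraph) : Prop := ∀ i, 1 ≤ i → i < G.tau → G.E i ⊆ G.E (i + 1)

/-- Monotonically shrinking: no edge appears over time. -/
def Shrinking (G : TemporalGraph) : Prop := ∀ i, 1 ≤ i → i < G.tau → G.E (i + 1) ⊆ G.E i

/-! ### The temporal diffusion game -/

/-- Initial coloring for the diffusion game: `p i` is colored `i`, except that a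
vertex chosen by both players is colored gray (`0`). -/
def diffInit (p1 p2 : ℕ) : ℕ → Option ℕ := fun v =>
  if v = p1 ∧ v = p2 then some 0
  else if v = p1 then some 1
  else if v = p2 then some 2
  else none

open Classical in
/-- One diffusion step on layer `Et`: an uncolored vertex with a neighbor of color
`i ∈ {1,2}` and no neighbor of the other color gets color `i`; an uncolored vertex
with neighbors of both colors becomes gray (`0`); colored vertices keep their color. -/
noncomputable def diffStep (Vset : Finset ℕ) (Et : Finset (Sym2 ℕ)) (c : ℕ → Option ℕ) :
    ℕ → Option ℕ := fun v =>
  match c v with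
  | some i => some i
  | none =>
    if v ∈ Vset ∧ (∃ u, s(u, v) ∈ Et ∧ c u = some 1) ∧ ¬ (∃ u, s(u, v) ∈ Et ∧ c u = some 2) then
      some 1
    else if v ∈ Vset ∧ (∃ u, s(u, v) ∈ Et ∧ c u = some 2) ∧ ¬ (∃ u, s(u, v) ∈ Et ∧ c u = some 1) then
      some 2
    else if v ∈ Vset ∧ (∃ u, s(u, v) ∈ Et ∧ c u = some 1) ∧ (∃ u, s(u, v) ∈ Et ∧ c u = some 2) then
      some 0
    else none

/-- The coloring of the diffusion game after `t` steps (step `t` uses layer `t`,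
where the last layer is repeated after time `τ`). -/
noncomputable def diffColoring (G : TemporalGraph) (p1 p2 : ℕ) : ℕ → ℕ → Option ℕ
  | 0 => diffInit p1 p2
  | t + 1 => diffStep G.V (G.layer (t + 1)) (diffColoring G p1 p2 t)

/-- The final coloring of the diffusion game. Since colored vertices never change
color and each non-stabilized step colors a new vertex, the process has stabilized
after `τ + n` steps, i.e. this is the coloring once it no longer changes. -/
noncomputable def diffFinal (G : TemporalGraph) (p1 p2 : ℕ) : ℕ → Option ℕ :=
  diffColoring G p1 p2 (G.tau + G.n)

open Classical in
/-- Payoff of player `i` in the temporal diffusion game: the number of vertices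
finally colored `i`. -/
noncomputable def diffPayoff (G : TemporalGraph) (p1 p2 i : ℕ) : ℕ :=
  (G.V.filter (fun v => diffFinal G p1 p2 v = some i)).card

/-- Nash equilibrium of the two-player temporal diffusion game `Diff(G, 2)`. -/
def diffNE (G : TemporalGraph) (p1 p2 : ℕ) : Prop :=
  p1 ∈ G.V ∧ p2 ∈ G.V ∧
  (∀ q ∈ G.V, diffPayoff G q p2 1 ≤ diffPayoff G p1 p2 1) ∧
  (∀ q ∈ G.V, diffPayoff G p1 q 2 ≤ diffPayoff G p1 p2 2)

/-! ### Temporal distances and the temporal Voronoi game -/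

/-- `G.reachesBy u t v`: there is a strict temporal walk from `u` to `v` with
arrival time at most `t` (layers after `τ` are the last layer `E τ`). -/
def reachesBy (G : TemporalGraph) (u : ℕ) : ℕ → ℕ → Prop
  | 0 => fun v => v = u
  | t + 1 => fun v =>
      reachesBy G u t v ∨ ∃ w, reachesBy G u t w ∧ s(w, v) ∈ G.layer (t + 1)

/-- `u` reaches `v` (until step `τ`). -/
def reaches (G : TemporalGraph) (u v : ℕ) : Prop := G.reachesBy u G.tau v

/-- The temporal distance `td(u, v)`: the minimum arrival time of a strict
temporal walk from `u` to `v` (`0` for `u = v`, `⊤` if there is no such walk). -/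
noncomputable def td (G : TemporalGraph) (u v : ℕ) : ℕ∞ :=
  sInf {t : ℕ∞ | ∃ k : ℕ, t = (k : ℕ∞) ∧ G.reachesBy u k v}

open Classical in
/-- The coloring in the temporal Voronoi game: `v` gets color `i` if player `i`
arrives strictly first, and is gray (`0`) on finite ties. -/
noncomputable def vorColor (G : TemporalGraph) (p1 p2 v : ℕ) : Option ℕ :=
  if G.td p1 v < G.td p2 v then some 1
  else if G.td p2 v < G.td p1 v then some 2
  else if G.td p1 v ≠ ⊤ then some 0
  else none

open Classical in
/-- Payoff of player `i` in the temporal Voronoi game. -/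
noncomputable def vorPayoff (G : TemporalGraph) (p1 p2 i : ℕ) : ℕ :=
  (G.V.filter (fun v => vorColor G p1 p2 v = some i)).card

/-- Nash equilibrium of the two-player temporal Voronoi game `Vor(G, 2)`. -/
def vorNE (G : TemporalGraph) (p1 p2 : ℕ) : Prop :=
  p1 ∈ G.V ∧ p2 ∈ G.V ∧
  (∀ q ∈ G.V, vorPayoff G q p2 1 ≤ vorPayoff G p1 p2 1) ∧
  (∀ q ∈ G.V, vorPayoff G p1 q 2 ≤ vorPayoff G p1 p2 2)

/-! ### Central vertices and boundaries -/

/-- `m` is a central vertex of the interval `[a, b]`: for odd length `ℓ` it is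
`a + ⌊ℓ/2⌋`; for even length it is one of `a + ℓ/2 - 1` and `a + ℓ/2`. -/
def IsCentral (a b m : ℕ) : Prop :=
  if (b - a + 1) % 2 = 1 then m = a + (b - a + 1) / 2
  else m = a + (b - a + 1) / 2 - 1 ∨ m = a + (b - a + 1) / 2

open Classical in
/-- The number of vertices reachable from `v` until step `τ`. -/
noncomputable def reachCard (G : TemporalGraph) (v : ℕ) : ℕ :=
  (G.V.filter (fun w => G.reaches v w)).card

/-- The maximum number of vertices reachable from any vertex. -/
noncomputable def maxReach (G : TemporalGraph) : ℕ := G.V.sup G.reachCard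

/-- A nice central vertex: it reaches the maximum number of vertices and is a
central vertex of its (interval of) reachable vertices. -/
def IsNiceCentral (G : TemporalGraph) (v : ℕ) : Prop :=
  v ∈ G.V ∧ G.reachCard v = G.maxReach ∧
  ∃ a b : ℕ, (∀ w : ℕ, G.reaches v w ↔ a ≤ w ∧ w ≤ b) ∧ IsCentral a b v

/-- The first layer in which edge `e` appears (`⊤` if it never does). -/
noncomputable def firstAppear (G : TemporalGraph) (e : Sym2 ℕ) : ℕ∞ :=
  sInf {t : ℕ∞ | ∃ k : ℕ, t = (k : ℕ∞) ∧ 1 ≤ k ∧ k ≤ G.tau ∧ e ∈ G.E k}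

/-- `b ≥ v` is a right boundary of `v` if the edge `{b, b+1}` first appears
strictly after time `td(v, b)`. -/
def IsRightBoundary (G : TemporalGraph) (v b : ℕ) : Prop :=
  v ≤ b ∧ b ∈ G.V ∧ G.td v b < G.firstAppear s(b, b + 1)

/-- `b ≤ v` is a left boundary of `v` if the edge `{b-1, b}` first appears
strictly after time `td(v, b)`. -/
def IsLeftBoundary (G : TemporalGraph) (v b : ℕ) : Prop :=
  b ≤ v ∧ b ∈ G.V ∧ G.td v b < G.firstAppear s(b - 1, b)

end TemporalGraph

open TemporalGraph

namespace Stmt11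

open TemporalGraph

def vtx (n : ℕ) (x : ZMod n) : ℕ := if x = 0 then n else x.val

lemma vtx_mem {n : ℕ} [NeZero n] (hn : 1 ≤ n) (x : ZMod n) : vtx n x ∈ Finset.Icc 1 n := by
  unfold vtx; split_ifs with h
  · simp [hn]
  · have h1 : 1 ≤ x.val := by
      rcases Nat.eq_zero_or_pos x.val with h0 | h0
      · exact absurd ((ZMod.val_eq_zero x).mp h0) h
      · exact h0
    have h2 := ZMod.val_lt x
    simp; omega

lemma cast_vtx {n : ℕ} [NeZero n] (x : ZMod n) : ((vtx n x : ℕ) : ZMod n) = x := by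
  unfold vtx; split_ifs with h
  · simp [h.symm, ZMod.natCast_self]
  · simp [ZMod.natCast_val]

lemma vtx_cast {n : ℕ} [NeZero n] {v : ℕ} (hv : v ∈ Finset.Icc 1 n) : vtx n ((v : ℕ) : ZMod n) = v := by
  simp only [Finset.mem_Icc] at hv
  unfold vtx; split_ifs with h
  · -- (v : ZMod n) = 0 → n ∣ v → v = n since 1 ≤ v ≤ n
    have hd := (ZMod.natCast_eq_zero_iff v n).mp h
    have := Nat.le_of_dvd (by omega) hd
    omega
  · have hlt : v < n := by
      rcases Nat.lt_or_ge v n with h' | h'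
      · exact h'
      · exfalso; apply h; have : v = n := by omega
        simp [this, ZMod.natCast_self]
    exact ZMod.val_cast_of_lt hlt

lemma edge_char {n : ℕ} [NeZero n] (hn : 3 ≤ n) {u w : ℕ} (h : s(u, w) ∈ cycleEdges n) :
    u ∈ Finset.Icc 1 n ∧ w ∈ Finset.Icc 1 n ∧
      ((w : ZMod n) = (u : ZMod n) + 1 ∨ (u : ZMod n) = (w : ZMod n) + 1) := by
  unfold cycleEdges pathEdges at h
  rw [Finset.mem_insert, Finset.mem_image] at h
  rcases h with h | ⟨i, hi, h⟩
  · rw [Sym2.eq_iff] at h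
    have hn0 : ((n : ℕ) : ZMod n) = 0 := ZMod.natCast_self n
    rcases h with ⟨rfl, rfl⟩ | ⟨rfl, rfl⟩ <;>
      refine ⟨by simp [Finset.mem_Icc]; omega, by simp [Finset.mem_Icc]; omega, ?_⟩
    · left; rw [hn0]; norm_num
    · right; rw [hn0]; norm_num
  · rw [Finset.mem_Icc] at hi
    rw [Sym2.eq_iff] at h
    rcases h with ⟨rfl, rfl⟩ | ⟨rfl, rfl⟩ <;>
      refine ⟨by simp [Finset.mem_Icc]; omega, by simp [Finset.mem_Icc]; omega, ?_⟩
    · left; push_cast; ring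
    · right; push_cast; ring

lemma edge_mem {n : ℕ} [NeZero n] (hn : 3 ≤ n) (x : ZMod n) :
    s(vtx n x, vtx n (x + 1)) ∈ cycleEdges n := by
  by_cases h : x = 0
  · have h1 : vtx n x = n := by simp [vtx, h]
    have h2 : vtx n (x + 1) = 1 := by
      have : x + 1 = ((1 : ℕ) : ZMod n) := by rw [h]; norm_num
      rw [this, vtx_cast (by simp [Finset.mem_Icc]; omega)]
    rw [h1, h2]; exact Finset.mem_insert_self _ _
  · have h1 : 1 ≤ x.val := by
      rcases Nat.eq_zero_or_pos x.val with h0 | h0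
      · exact absurd ((ZMod.val_eq_zero x).mp h0) h
      · exact h0
    have h2 := ZMod.val_lt x
    have hvx : vtx n x = x.val := by simp [vtx, h]
    have hx : x = ((x.val : ℕ) : ZMod n) := by simp [ZMod.natCast_val]
    have h3 : vtx n (x + 1) = x.val + 1 := by
      have : x + 1 = ((x.val + 1 : ℕ) : ZMod n) := by push_cast; simp [ZMod.natCast_val]
      rw [this, vtx_cast (by simp [Finset.mem_Icc]; omega)]
    rw [hvx, h3]
    unfold cycleEdges pathEdges
    apply Finset.mem_insert_of_mem
    exact Finset.mem_image.mpr ⟨x.val, by simp [Finset.mem_Icc]; omega, rfl⟩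

lemma neighbor_char {n : ℕ} [NeZero n] (hn : 3 ≤ n) {u : ℕ} {x : ZMod n}
    (h : s(u, vtx n x) ∈ cycleEdges n) : u = vtx n (x + 1) ∨ u = vtx n (x - 1) := by
  obtain ⟨hu, -, hrel⟩ := edge_char hn h
  rw [cast_vtx] at hrel
  rcases hrel with h1 | h1
  · right
    have : (u : ZMod n) = x - 1 := by linear_combination -h1
    rw [← this, vtx_cast hu]
  · left
    rw [← h1, vtx_cast hu]


section Layers

variable (G : TemporalGraph)

lemma E_mono (hMG : G.Growing) : ∀ j i, 1 ≤ i → i + j ≤ G.tau → G.E i ⊆ G.E (i + j) := by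
  intro j
  induction j with
  | zero => intro i _ _; simp
  | succ j ih =>
    intro i hi hij
    have h1 : G.E i ⊆ G.E (i + j) := ih i hi (by omega)
    have h2 : G.E (i + j) ⊆ G.E (i + j + 1) := hMG (i + j) (by omega) (by omega)
    exact h1.trans h2

lemma E_sub_last (hMG : G.Growing) {i : ℕ} (h1 : 1 ≤ i) (h2 : i ≤ G.tau) :
    G.E i ⊆ G.E G.tau := by
  have := E_mono G hMG (G.tau - i) i h1 (by omega)
  rwa [show i + (G.tau - i) = G.tau by omega] at this

lemma underlying_eq (hMG : G.Growing) : G.underlying = G.E G.tau := by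
  apply subset_antisymm
  · apply Finset.biUnion_subset.mpr
    intro i hi
    rw [Finset.mem_Icc] at hi
    exact E_sub_last G hMG hi.1 hi.2
  · exact Finset.subset_biUnion_of_mem G.E (Finset.mem_Icc.mpr ⟨G.htau, le_refl _⟩)

lemma layer_sub (hC : G.IsCycle) (hMG : G.Growing) (t : ℕ) (ht : 1 ≤ t) :
    G.layer t ⊆ cycleEdges G.n := by
  have hu : G.E G.tau = cycleEdges G.n := by rw [← underlying_eq G hMG, hC.2]
  unfold layer
  split_ifs with h
  · exact (E_sub_last G hMG ht h).trans (le_of_eq hu)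
  · exact le_of_eq hu

lemma layer_late (hC : G.IsCycle) (hMG : G.Growing) (t : ℕ) (ht : G.tau ≤ t) :
    G.layer t = cycleEdges G.n := by
  have hu : G.E G.tau = cycleEdges G.n := by rw [← underlying_eq G hMG, hC.2]
  unfold layer
  split_ifs with h
  · rw [show t = G.tau by omega]; exact hu
  · exact hu

end Layers

section Coloring

variable (G : TemporalGraph) (p1 p2 : ℕ)

open Classical in
lemma diffStep_some {Vset : Finset ℕ} {Et : Finset (Sym2 ℕ)} {c : ℕ → Option ℕ} {v : ℕ} {i : ℕ}
    (h : c v = some i) : diffStep Vset Et c v = some i := by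
  unfold diffStep; rw [h]

open Classical in
lemma diffStep_none {Vset : Finset ℕ} {Et : Finset (Sym2 ℕ)} {c : ℕ → Option ℕ} {v : ℕ}
    (h : c v = none) : diffStep Vset Et c v =
    (if v ∈ Vset ∧ (∃ u, s(u, v) ∈ Et ∧ c u = some 1) ∧ ¬ (∃ u, s(u, v) ∈ Et ∧ c u = some 2) then
      some 1
    else if v ∈ Vset ∧ (∃ u, s(u, v) ∈ Et ∧ c u = some 2) ∧ ¬ (∃ u, s(u, v) ∈ Et ∧ c u = some 1) then
      some 2
    else if v ∈ Vset ∧ (∃ u, s(u, v) ∈ Et ∧ c u = some 1) ∧ (∃ u, s(u, v) ∈ Et ∧ c u = some 2) then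
      some 0
    else none) := by
  unfold diffStep; rw [h]

lemma coloring_succ (t : ℕ) :
    G.diffColoring p1 p2 (t + 1) = diffStep G.V (G.layer (t + 1)) (G.diffColoring p1 p2 t) := rfl

lemma persist_step {t v i} (h : G.diffColoring p1 p2 t v = some i) :
    G.diffColoring p1 p2 (t + 1) v = some i := by
  rw [coloring_succ]; exact diffStep_some h

lemma persist_le {t s v i} (hts : t ≤ s) (h : G.diffColoring p1 p2 t v = some i) :
    G.diffColoring p1 p2 s v = some i := by
  induction s with
  | zero => rwa [Nat.le_zero.mp hts] at h
  | succ s ih =>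
    rcases Nat.lt_or_ge t (s + 1) with h' | h'
    · exact persist_step G p1 p2 (ih (by omega))
    · rwa [show t = s + 1 by omega] at h

lemma color_le2 {t v i} (h : G.diffColoring p1 p2 t v = some i) : i ≤ 2 := by
  induction t generalizing v i with
  | zero =>
    unfold diffColoring diffInit at h
    split_ifs at h
    · injection h with h'; omega
    · injection h with h'; omega
    · injection h with h'; omega
  | succ t ih =>
    rw [coloring_succ] at h
    cases h0 : G.diffColoring p1 p2 t v with
    | some j =>
      rw [diffStep_some h0] at h
      injection h with h'
      exact h' ▸ ih h0
    | none =>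
      rw [diffStep_none h0] at h
      split_ifs at h
      · injection h with h'; omega
      · injection h with h'; omega
      · injection h with h'; omega

end Coloring


section StepLemmas

variable (G : TemporalGraph) (p1 p2 : ℕ)

lemma new1 [NeZero G.n] (hn : 3 ≤ G.n) {t : ℕ} {x : ZMod G.n}
    (hL : G.layer (t + 1) ⊆ cycleEdges G.n)
    (h0 : G.diffColoring p1 p2 t (vtx G.n x) = none)
    (h1 : G.diffColoring p1 p2 (t + 1) (vtx G.n x) = some 1) :
    G.diffColoring p1 p2 t (vtx G.n (x + 1)) = some 1 ∨
    G.diffColoring p1 p2 t (vtx G.n (x - 1)) = some 1 := by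
  rw [coloring_succ, diffStep_none h0] at h1
  split_ifs at h1 with hc hc2 hc3
  · obtain ⟨u, hu, hcu⟩ := hc.2.1
    rcases neighbor_char hn (hL hu) with rfl | rfl
    · exact Or.inl hcu
    · exact Or.inr hcu
  · injection h1 with h'; omega
  · injection h1 with h'; omega

lemma new_gray [NeZero G.n] (hn : 3 ≤ G.n) {t : ℕ} {x : ZMod G.n}
    (hL : G.layer (t + 1) ⊆ cycleEdges G.n)
    (h0 : G.diffColoring p1 p2 t (vtx G.n x) = none)
    (hg : G.diffColoring p1 p2 (t + 1) (vtx G.n x) = some 0) :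
    (G.diffColoring p1 p2 t (vtx G.n (x - 1)) = some 1 ∧
     G.diffColoring p1 p2 t (vtx G.n (x + 1)) = some 2) ∨
    (G.diffColoring p1 p2 t (vtx G.n (x - 1)) = some 2 ∧
     G.diffColoring p1 p2 t (vtx G.n (x + 1)) = some 1) := by
  rw [coloring_succ, diffStep_none h0] at hg
  split_ifs at hg with hc hc2 hc3
  · injection hg with h'; omega
  · injection hg with h'; omega
  · obtain ⟨u1, hu1, hcu1⟩ := hc3.2.1
    obtain ⟨u2, hu2, hcu2⟩ := hc3.2.2
    rcases neighbor_char hn (hL hu1) with rfl | rfl <;>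
      rcases neighbor_char hn (hL hu2) with h | h
    · rw [h, hcu1] at hcu2; simp at hcu2
    · exact Or.inr ⟨h ▸ hcu2, hcu1⟩
    · exact Or.inl ⟨hcu1, h ▸ hcu2⟩
    · rw [h, hcu1] at hcu2; simp at hcu2

lemma progress [NeZero G.n] (hn : 3 ≤ G.n) {t : ℕ} {x : ZMod G.n} {i : ℕ}
    (hlay : G.layer (t + 1) = cycleEdges G.n)
    (h0 : G.diffColoring p1 p2 t (vtx G.n x) = none)
    (hnb : G.diffColoring p1 p2 t (vtx G.n (x + 1)) = some i ∨
           G.diffColoring p1 p2 t (vtx G.n (x - 1)) = some i)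
    (hi : i = 1 ∨ i = 2) :
    G.diffColoring p1 p2 (t + 1) (vtx G.n x) ≠ none := by
  rw [coloring_succ, diffStep_none h0]
  have hv : vtx G.n x ∈ G.V := vtx_mem (by omega) x
  have hedge : ∃ u, s(u, vtx G.n x) ∈ G.layer (t + 1) ∧
      G.diffColoring p1 p2 t u = some i := by
    rcases hnb with h | h
    · refine ⟨vtx G.n (x + 1), ?_, h⟩
      rw [hlay, Sym2.eq_swap]
      exact edge_mem hn x
    · refine ⟨vtx G.n (x - 1), ?_, h⟩
      rw [hlay]
      have := edge_mem hn (x - 1)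
      rwa [sub_add_cancel] at this
  split_ifs with hA hB hC
  · simp
  · simp
  · simp
  · exfalso
    rcases hi with rfl | rfl
    · by_cases h2 : ∃ u, s(u, vtx G.n x) ∈ G.layer (t + 1) ∧
          G.diffColoring p1 p2 t u = some 2
      · exact hC ⟨hv, hedge, h2⟩
      · exact hA ⟨hv, hedge, h2⟩
    · by_cases h1 : ∃ u, s(u, vtx G.n x) ∈ G.layer (t + 1) ∧
          G.diffColoring p1 p2 t u = some 1
      · exact hC ⟨hv, h1, hedge⟩
      · exact hB ⟨hv, hedge, h1⟩

end StepLemmas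

end Stmt11

open Stmt11

/-- On a monotonically growing temporal cycle, for any strategy
profile with `p1 ≠ p2`, in the final coloring of `Diff(C, 2)` no vertex remains
uncolored and at most two vertices are colored gray. -/
theorem stmt11 (G : TemporalGraph) (hC : G.IsCycle) (hMG : G.Growing)
    (p1 p2 : ℕ) (h1 : p1 ∈ G.V) (h2 : p2 ∈ G.V) (hne : p1 ≠ p2) :
    (∀ v ∈ G.V, G.diffFinal p1 p2 v ≠ none) ∧
    (G.V.filter (fun v => G.diffFinal p1 p2 v = some 0)).card ≤ 2 := by
  classical
  have hn3 : 3 ≤ G.n := hC.1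
  haveI : NeZero G.n := ⟨by omega⟩
  have h1' : p1 ∈ Finset.Icc 1 G.n := by simpa [TemporalGraph.V] using h1
  have h2' : p2 ∈ Finset.Icc 1 G.n := by simpa [TemporalGraph.V] using h2
  have hinit1 : G.diffColoring p1 p2 0 p1 = some 1 := by
    show diffInit p1 p2 p1 = some 1
    unfold diffInit
    rw [if_neg (fun h : p1 = p1 ∧ p1 = p2 => hne h.2), if_pos rfl]
  have hp1t : ∀ t, G.diffColoring p1 p2 t p1 = some 1 :=
    fun t => persist_le G p1 p2 (Nat.zero_le t) hinit1
  -- The invariant: the color-1 set is an arc, and gray vertices have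
  -- 1- and 2-colored cycle neighbors.
  have INV : ∀ t : ℕ,
      (∃ a : ZMod G.n, ∃ k : ℕ, 1 ≤ k ∧
        (∀ x : ZMod G.n, G.diffColoring p1 p2 t (vtx G.n x) = some 1 ↔
          ∃ j : ℕ, j < k ∧ x = a + (j : ZMod G.n))) ∧
      (∀ x : ZMod G.n, G.diffColoring p1 p2 t (vtx G.n x) = some 0 →
        (G.diffColoring p1 p2 t (vtx G.n (x - 1)) = some 1 ∧
         G.diffColoring p1 p2 t (vtx G.n (x + 1)) = some 2) ∨
        (G.diffColoring p1 p2 t (vtx G.n (x - 1)) = some 2 ∧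
         G.diffColoring p1 p2 t (vtx G.n (x + 1)) = some 1)) := by
    intro t
    induction t with
    | zero =>
      constructor
      · refine ⟨(p1 : ZMod G.n), 1, le_refl _, fun x => ?_⟩
        constructor
        · intro hx
          have hxp : vtx G.n x = p1 := by
            unfold diffColoring diffInit at hx
            split_ifs at hx with hA hB hc
            · injection hx with h'; omega
            · exact hB
            · injection hx with h'; omega
          exact ⟨0, by omega, by rw [← hxp, cast_vtx]; simp⟩
        · rintro ⟨j, hj, rfl⟩
          have hj0 : j = 0 := by omega
          subst hj0
          have hv : vtx G.n ((p1 : ZMod G.n) + ((0 : ℕ) : ZMod G.n)) = p1 := by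
            simpa using vtx_cast h1'
          rw [hv]; exact hinit1
      · intro x hx
        exfalso
        unfold diffColoring diffInit at hx
        split_ifs at hx with hA hB hc
        · exact hne (hA.1 ▸ hA.2)
        · injection hx with h'; omega
        · injection hx with h'; omega
    | succ t ih =>
      obtain ⟨⟨a, k, hk, harc⟩, hgray⟩ := ih
      have hL : G.layer (t + 1) ⊆ cycleEdges G.n := layer_sub G hC hMG (t + 1) (by omega)
      have old : ∀ j : ℕ, j < k →
          G.diffColoring p1 p2 (t + 1) (vtx G.n (a + (j : ZMod G.n))) = some 1 :=
        fun j hj => persist_step G p1 p2 ((harc _).mpr ⟨j, hj, rfl⟩)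
      have fwd : ∀ x : ZMod G.n, G.diffColoring p1 p2 (t + 1) (vtx G.n x) = some 1 →
          (∃ j : ℕ, j < k ∧ x = a + (j : ZMod G.n)) ∨ x = a - 1 ∨ x = a + (k : ZMod G.n) := by
        intro x hx
        cases h0 : G.diffColoring p1 p2 t (vtx G.n x) with
        | some i =>
          have hps := persist_step G p1 p2 h0
          rw [hx] at hps
          injection hps with h'
          subst h'
          exact Or.inl ((harc x).mp h0)
        | none =>
          rcases new1 G p1 p2 hn3 hL h0 hx with h | h
          · obtain ⟨j, hj, hxj⟩ := (harc _).mp h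
            rcases Nat.eq_zero_or_pos j with rfl | hj1
            · right; left
              push_cast at hxj
              linear_combination hxj
            · exfalso
              have hx' : x = a + ((j - 1 : ℕ) : ZMod G.n) := by
                push_cast [Nat.cast_sub hj1]
                linear_combination hxj
              have hcontra := (harc x).mpr ⟨j - 1, by omega, hx'⟩
              rw [h0] at hcontra
              simp at hcontra
          · obtain ⟨j, hj, hxj⟩ := (harc _).mp h
            by_cases hjk : j + 1 < k
            · exfalso
              have hx' : x = a + ((j + 1 : ℕ) : ZMod G.n) := by
                push_cast
                linear_combination hxj
              have hcontra := (harc x).mpr ⟨j + 1, hjk, hx'⟩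
              rw [h0] at hcontra
              simp at hcontra
            · right; right
              have hjk' : j + 1 = k := by omega
              rw [← hjk']
              push_cast
              linear_combination hxj
      have grayStep : ∀ x : ZMod G.n,
          G.diffColoring p1 p2 (t + 1) (vtx G.n x) = some 0 →
          (G.diffColoring p1 p2 (t + 1) (vtx G.n (x - 1)) = some 1 ∧
           G.diffColoring p1 p2 (t + 1) (vtx G.n (x + 1)) = some 2) ∨
          (G.diffColoring p1 p2 (t + 1) (vtx G.n (x - 1)) = some 2 ∧
           G.diffColoring p1 p2 (t + 1) (vtx G.n (x + 1)) = some 1) := by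
        intro x hx
        cases h0 : G.diffColoring p1 p2 t (vtx G.n x) with
        | some i =>
          have hps := persist_step G p1 p2 h0
          rw [hx] at hps
          injection hps with h'
          subst h'
          rcases hgray x h0 with ⟨ha, hb⟩ | ⟨ha, hb⟩
          · exact Or.inl ⟨persist_step G p1 p2 ha, persist_step G p1 p2 hb⟩
          · exact Or.inr ⟨persist_step G p1 p2 ha, persist_step G p1 p2 hb⟩
        | none =>
          rcases new_gray G p1 p2 hn3 hL h0 hx with ⟨ha, hb⟩ | ⟨ha, hb⟩
          · exact Or.inl ⟨persist_step G p1 p2 ha, persist_step G p1 p2 hb⟩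
          · exact Or.inr ⟨persist_step G p1 p2 ha, persist_step G p1 p2 hb⟩
      refine ⟨?_, grayStep⟩
      by_cases hA : G.diffColoring p1 p2 (t + 1) (vtx G.n (a - 1)) = some 1 <;>
        by_cases hB : G.diffColoring p1 p2 (t + 1) (vtx G.n (a + (k : ZMod G.n))) = some 1
      · refine ⟨a - 1, k + 2, by omega, fun x => ⟨fun hx => ?_, ?_⟩⟩
        · rcases fwd x hx with ⟨j, hj, rfl⟩ | rfl | rfl
          · exact ⟨j + 1, by omega, by push_cast; ring⟩
          · exact ⟨0, by omega, by push_cast; ring⟩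
          · exact ⟨k + 1, by omega, by push_cast; ring⟩
        · rintro ⟨j, hj, rfl⟩
          by_cases hj0 : j = 0
          · subst hj0; simpa using hA
          · by_cases hjk : j = k + 1
            · subst hjk
              have he : a - 1 + ((k + 1 : ℕ) : ZMod G.n) = a + (k : ZMod G.n) := by
                push_cast; ring
              rw [he]; exact hB
            · have he : a - 1 + ((j : ℕ) : ZMod G.n) = a + ((j - 1 : ℕ) : ZMod G.n) := by
                push_cast [Nat.cast_sub (by omega : 1 ≤ j)]; ring
              rw [he]; exact old (j - 1) (by omega)
      · refine ⟨a - 1, k + 1, by omega, fun x => ⟨fun hx => ?_, ?_⟩⟩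
        · rcases fwd x hx with ⟨j, hj, rfl⟩ | rfl | rfl
          · exact ⟨j + 1, by omega, by push_cast; ring⟩
          · exact ⟨0, by omega, by push_cast; ring⟩
          · exact absurd hx hB
        · rintro ⟨j, hj, rfl⟩
          by_cases hj0 : j = 0
          · subst hj0; simpa using hA
          · have he : a - 1 + ((j : ℕ) : ZMod G.n) = a + ((j - 1 : ℕ) : ZMod G.n) := by
              push_cast [Nat.cast_sub (by omega : 1 ≤ j)]; ring
            rw [he]; exact old (j - 1) (by omega)
      · refine ⟨a, k + 1, by omega, fun x => ⟨fun hx => ?_, ?_⟩⟩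
        · rcases fwd x hx with ⟨j, hj, rfl⟩ | rfl | rfl
          · exact ⟨j, by omega, rfl⟩
          · exact absurd hx hA
          · exact ⟨k, by omega, rfl⟩
        · rintro ⟨j, hj, rfl⟩
          by_cases hjk : j = k
          · subst hjk; exact hB
          · exact old j (by omega)
      · refine ⟨a, k, hk, fun x => ⟨fun hx => ?_, ?_⟩⟩
        · rcases fwd x hx with ⟨j, hj, rfl⟩ | rfl | rfl
          · exact ⟨j, hj, rfl⟩
          · exact absurd hx hA
          · exact absurd hx hB
        · rintro ⟨j, hj, rfl⟩
          exact old j hj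
  -- Progress: after time tau each step colors a new vertex while any remain.
  have hUsub : ∀ t : ℕ,
      (G.V.filter (fun v => G.diffColoring p1 p2 (t + 1) v = none)) ⊆
      (G.V.filter (fun v => G.diffColoring p1 p2 t v = none)) := by
    intro t v hv
    rw [Finset.mem_filter] at hv ⊢
    refine ⟨hv.1, ?_⟩
    cases hcv : G.diffColoring p1 p2 t v with
    | none => rfl
    | some i =>
      have := persist_step G p1 p2 hcv
      rw [hv.2] at this
      simp at this
  have hkey : ∀ t : ℕ, G.tau ≤ t →
      (G.V.filter (fun v => G.diffColoring p1 p2 t v = none)).Nonempty →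
      (G.V.filter (fun v => G.diffColoring p1 p2 (t + 1) v = none)).card <
      (G.V.filter (fun v => G.diffColoring p1 p2 t v = none)).card := by
    intro t ht ⟨v₀, hv₀⟩
    rw [Finset.mem_filter] at hv₀
    have hv₀' : v₀ ∈ Finset.Icc 1 G.n := by simpa [TemporalGraph.V] using hv₀.1
    have hx₀ : G.diffColoring p1 p2 t (vtx G.n ((v₀ : ZMod G.n))) = none := by
      rw [vtx_cast hv₀']; exact hv₀.2
    have hexists : ∃ j : ℕ,
        ¬ G.diffColoring p1 p2 t (vtx G.n ((v₀ : ZMod G.n) + (j : ZMod G.n))) = none := by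
      refine ⟨((p1 : ZMod G.n) - (v₀ : ZMod G.n)).val, ?_⟩
      have he : (v₀ : ZMod G.n) + ((((p1 : ZMod G.n) - (v₀ : ZMod G.n)).val : ℕ) : ZMod G.n)
          = (p1 : ZMod G.n) := by
        simp [ZMod.natCast_val]
      rw [he, vtx_cast h1', hp1t t]
      simp
    set j := Nat.find hexists with hjdef
    have hjspec := Nat.find_spec hexists
    have hj1 : 1 ≤ j := by
      rcases Nat.eq_zero_or_pos j with h | h
      · exfalso
        apply hjspec
        rw [hjdef] at h
        rw [← hjdef] at h ⊢
        rw [h]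
        simpa using hx₀
      · exact h
    have hmin : G.diffColoring p1 p2 t (vtx G.n ((v₀ : ZMod G.n) + ((j - 1 : ℕ) : ZMod G.n)))
        = none := by
      by_contra h
      exact Nat.find_min hexists (by omega) h
    have hnext : ¬ G.diffColoring p1 p2 t
        (vtx G.n ((v₀ : ZMod G.n) + ((j - 1 : ℕ) : ZMod G.n) + 1)) = none := by
      have he : (v₀ : ZMod G.n) + ((j - 1 : ℕ) : ZMod G.n) + 1
          = (v₀ : ZMod G.n) + (j : ZMod G.n) := by
        push_cast [Nat.cast_sub hj1]; ring
      rw [he]; exact hjspec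
    obtain ⟨i, hi⟩ : ∃ i, G.diffColoring p1 p2 t
        (vtx G.n ((v₀ : ZMod G.n) + ((j - 1 : ℕ) : ZMod G.n) + 1)) = some i :=
      Option.ne_none_iff_exists'.mp hnext
    have hi12 : i = 1 ∨ i = 2 := by
      have hle := color_le2 G p1 p2 hi
      by_cases h0 : i = 0
      · exfalso
        subst h0
        rcases (INV t).2 _ hi with ⟨ha, _⟩ | ⟨ha, _⟩ <;>
          · rw [add_sub_cancel_right, hmin] at ha
            simp at ha
      · omega
    have hprog := progress G p1 p2 hn3 (layer_late G hC hMG (t + 1) (by omega)) hmin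
      (Or.inl hi) hi12
    have hxin : vtx G.n ((v₀ : ZMod G.n) + ((j - 1 : ℕ) : ZMod G.n)) ∈
        G.V.filter (fun v => G.diffColoring p1 p2 t v = none) :=
      Finset.mem_filter.mpr ⟨by simpa [TemporalGraph.V] using vtx_mem (by omega) _, hmin⟩
    have hxout : vtx G.n ((v₀ : ZMod G.n) + ((j - 1 : ℕ) : ZMod G.n)) ∉
        G.V.filter (fun v => G.diffColoring p1 p2 (t + 1) v = none) :=
      fun h => hprog (Finset.mem_filter.mp h).2
    exact Finset.card_lt_card
      ((Finset.ssubset_iff_of_subset (hUsub t)).mpr ⟨_, hxin, hxout⟩)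
  have hcount : ∀ s : ℕ,
      (G.V.filter (fun v => G.diffColoring p1 p2 (G.tau + s) v = none)).card + s ≤ G.n ∨
      (G.V.filter (fun v => G.diffColoring p1 p2 (G.tau + s) v = none)).card = 0 := by
    intro s
    induction s with
    | zero =>
      left
      have hle := Finset.card_filter_le G.V (fun v => G.diffColoring p1 p2 (G.tau + 0) v = none)
      have hcard : G.V.card = G.n := by simp [TemporalGraph.V]
      omega
    | succ s ih =>
      have hsub : (G.V.filter (fun v => G.diffColoring p1 p2 (G.tau + (s + 1)) v = none)) ⊆
          (G.V.filter (fun v => G.diffColoring p1 p2 (G.tau + s) v = none)) := by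
        rw [show G.tau + (s + 1) = (G.tau + s) + 1 by ring]
        exact hUsub _
      rcases ih with h | h
      · by_cases hne' : (G.V.filter (fun v => G.diffColoring p1 p2 (G.tau + s) v = none)).Nonempty
        · left
          have hlt := hkey (G.tau + s) (by omega) hne'
          rw [show G.tau + (s + 1) = (G.tau + s) + 1 by ring]
          omega
        · right
          rw [Finset.not_nonempty_iff_eq_empty] at hne'
          rw [hne'] at hsub
          exact Finset.card_eq_zero.mpr (Finset.subset_empty.mp hsub)
      · right
        rw [Finset.card_eq_zero] at h
        rw [h] at hsub
        exact Finset.card_eq_zero.mpr (Finset.subset_empty.mp hsub)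
  have hempty : (G.V.filter (fun v => G.diffColoring p1 p2 (G.tau + G.n) v = none)) = ∅ := by
    rcases hcount G.n with h | h
    · exact Finset.card_eq_zero.mp (by omega)
    · exact Finset.card_eq_zero.mp h
  constructor
  · intro v hv hvnone
    have hmem : v ∈ G.V.filter (fun v => G.diffColoring p1 p2 (G.tau + G.n) v = none) :=
      Finset.mem_filter.mpr ⟨hv, hvnone⟩
    rw [hempty] at hmem
    simp at hmem
  · obtain ⟨⟨a, k, hk, harc⟩, hgray⟩ := INV (G.tau + G.n)
    have hsub : G.V.filter (fun v => G.diffFinal p1 p2 v = some 0) ⊆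
        {vtx G.n (a + (k : ZMod G.n)), vtx G.n (a - 1)} := by
      intro v hv
      rw [Finset.mem_filter] at hv
      obtain ⟨hvV, hv0⟩ := hv
      have hvV' : v ∈ Finset.Icc 1 G.n := by simpa [TemporalGraph.V] using hvV
      have hx : G.diffColoring p1 p2 (G.tau + G.n) (vtx G.n ((v : ZMod G.n))) = some 0 := by
        rw [vtx_cast hvV']; exact hv0
      rcases hgray _ hx with ⟨ha, _⟩ | ⟨_, ha⟩
      · obtain ⟨j, hj, hxj⟩ := (harc _).mp ha
        by_cases hjk : j + 1 < k
        · exfalso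
          have hx1 : (v : ZMod G.n) = a + ((j + 1 : ℕ) : ZMod G.n) := by
            push_cast; linear_combination hxj
          have hcontra := (harc _).mpr ⟨j + 1, hjk, hx1⟩
          rw [hx] at hcontra
          simp at hcontra
        · have hxk : (v : ZMod G.n) = a + ((k : ℕ) : ZMod G.n) := by
            rw [show k = j + 1 by omega]
            push_cast; linear_combination hxj
          have hveq : v = vtx G.n (a + (k : ZMod G.n)) := by
            rw [← hxk]; exact (vtx_cast hvV').symm
          rw [hveq]; exact Finset.mem_insert_self _ _
      · obtain ⟨j, hj, hxj⟩ := (harc _).mp ha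
        rcases Nat.eq_zero_or_pos j with rfl | hj1
        · have hxa : (v : ZMod G.n) = a - 1 := by
            push_cast at hxj; linear_combination hxj
          have hveq : v = vtx G.n (a - 1) := by
            rw [← hxa]; exact (vtx_cast hvV').symm
          rw [hveq]
          exact Finset.mem_insert_of_mem (Finset.mem_singleton_self _)
        · exfalso
          have hx1 : (v : ZMod G.n) = a + ((j - 1 : ℕ) : ZMod G.n) := by
            push_cast [Nat.cast_sub hj1]; linear_combination hxj
          have hcontra := (harc _).mpr ⟨j - 1, by omega, hx1⟩
          rw [hx] at hcontra
          simp at hcontra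
    calc (G.V.filter (fun v => G.diffFinal p1 p2 v = some 0)).card
        ≤ ({vtx G.n (a + (k : ZMod G.n)), vtx G.n (a - 1)} : Finset ℕ).card :=
          Finset.card_le_card hsub
      _ ≤ 2 := (Finset.card_insert_le _ _).trans (by simp)
end

section
/- Let P = ([n], E_1, …, E_τ) be a monotonically growing temporal path and let v < w < x be vertices in [n]. Then td(v, x) = td(w, x) if and only if there exists a right boundary r of v with w ≤ r < x. -/
open Finset

open TemporalGraph

namespace Stmt17Aux

/-- First layer in which edge `{b, b+1}` appears, as a natural number. -/
noncomputable def fa (G : TemporalGraph) (b : ℕ) : ℕ :=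
  sInf {k : ℕ | 1 ≤ k ∧ k ≤ G.tau ∧ s(b, b + 1) ∈ G.E k}

/-- Explicit rightward arrival-time function from source `u`. -/
noncomputable def D (G : TemporalGraph) (u : ℕ) : ℕ → ℕ
  | 0 => 0
  | b + 1 => if u ≤ b then max (D G u b + 1) (fa G b) else 0

lemma D_succ_of_le (G : TemporalGraph) {u b : ℕ} (h : u ≤ b) :
    D G u (b + 1) = max (D G u b + 1) (fa G b) := by simp [D, h]

lemma D_eq_zero (G : TemporalGraph) {u b : ℕ} (h : b ≤ u) : D G u b = 0 := by
  cases b with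
  | zero => rfl
  | succ c => simp [D, Nat.not_le.mpr (Nat.lt_of_succ_le h)]

lemma D_mono (G : TemporalGraph) (u : ℕ) : Monotone (D G u) := by
  apply monotone_nat_of_le_succ
  intro b
  by_cases h : u ≤ b
  · rw [D_succ_of_le G h]
    exact le_trans (Nat.le_succ _) (le_max_left _ _)
  · rw [D_eq_zero G (le_of_lt (Nat.lt_of_not_le h)),
      D_eq_zero G (Nat.succ_le_of_lt (Nat.lt_of_not_le h))]

lemma D_pos (G : TemporalGraph) {u b : ℕ} (h : u < b) : 1 ≤ D G u b := by
  cases b with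
  | zero => omega
  | succ c =>
    rw [D_succ_of_le G (Nat.le_of_lt_succ h)]
    exact le_trans (by omega) (le_max_left _ _)

lemma D_source_mono (G : TemporalGraph) {v w : ℕ} (hvw : v ≤ w) (b : ℕ) :
    D G w b ≤ D G v b := by
  induction b with
  | zero => exact le_rfl
  | succ b ih =>
    by_cases h : w ≤ b
    · rw [D_succ_of_le G h, D_succ_of_le G (le_trans hvw h)]
      exact max_le_max (by omega) le_rfl
    · rw [D_eq_zero G (Nat.succ_le_of_lt (Nat.lt_of_not_le h))]
      exact Nat.zero_le _

lemma edge_mem_underlying (G : TemporalGraph) (hP : G.IsPath) {b : ℕ}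
    (hb1 : 1 ≤ b) (hb2 : b + 1 ≤ G.n) : s(b, b + 1) ∈ G.underlying := by
  rw [hP.2, pathEdges]
  exact Finset.mem_image.mpr ⟨b, Finset.mem_Icc.mpr ⟨hb1, by omega⟩, rfl⟩

lemma fa_spec (G : TemporalGraph) {b : ℕ} (h : s(b, b + 1) ∈ G.underlying) :
    1 ≤ fa G b ∧ fa G b ≤ G.tau ∧ s(b, b + 1) ∈ G.E (fa G b) := by
  rw [underlying, Finset.mem_biUnion] at h
  obtain ⟨t, ht, hm⟩ := h
  rw [Finset.mem_Icc] at ht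
  have hne : {k : ℕ | 1 ≤ k ∧ k ≤ G.tau ∧ s(b, b + 1) ∈ G.E k}.Nonempty :=
    ⟨t, ht.1, ht.2, hm⟩
  exact Nat.sInf_mem hne

lemma firstAppear_eq (G : TemporalGraph) {b : ℕ} (h : s(b, b + 1) ∈ G.underlying) :
    G.firstAppear s(b, b + 1) = (fa G b : ℕ∞) := by
  obtain ⟨h1, h2, h3⟩ := fa_spec G h
  apply le_antisymm
  · exact sInf_le ⟨fa G b, rfl, h1, h2, h3⟩
  · apply le_sInf
    rintro t ⟨k, rfl, hk1, hk2, hk3⟩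
    have hle : fa G b ≤ k := Nat.sInf_le ⟨hk1, hk2, hk3⟩
    exact_mod_cast hle

lemma fa_le_of_mem_layer (G : TemporalGraph) {b t : ℕ}
    (h : s(b, b + 1) ∈ G.layer t) (ht : 1 ≤ t) : fa G b ≤ t := by
  rw [layer] at h
  split_ifs at h with h'
  · exact Nat.sInf_le ⟨ht, h', h⟩
  · exact le_trans (Nat.sInf_le ⟨G.htau, le_rfl, h⟩) (le_of_not_ge h')

lemma edge_mem_layer (G : TemporalGraph) (hMG : G.Growing) {b t : ℕ}
    (h : s(b, b + 1) ∈ G.underlying) (ht : fa G b ≤ t) : s(b, b + 1) ∈ G.layer t := by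
  obtain ⟨h1, h2, h3⟩ := fa_spec G h
  have key : ∀ s, fa G b ≤ s → s ≤ G.tau → s(b, b + 1) ∈ G.E s := by
    intro s hs
    induction s, hs using Nat.le_induction with
    | base => exact fun _ => h3
    | succ s hs ih =>
      intro hsτ
      exact hMG s (le_trans h1 hs) (by omega) (ih (by omega))
  rw [layer]
  split_ifs with h'
  · exact key t ht h'
  · exact key G.tau h2 le_rfl

lemma layer_subset_underlying (G : TemporalGraph) {t : ℕ} (ht : 1 ≤ t) :
    G.layer t ⊆ G.underlying := by
  intro e he
  rw [layer] at he
  rw [underlying, Finset.mem_biUnion]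
  split_ifs at he with h'
  · exact ⟨t, Finset.mem_Icc.mpr ⟨ht, h'⟩, he⟩
  · exact ⟨G.tau, Finset.mem_Icc.mpr ⟨G.htau, le_rfl⟩, he⟩

lemma reachesBy_zero (G : TemporalGraph) (u z : ℕ) :
    G.reachesBy u 0 z ↔ z = u := Iff.rfl

lemma reachesBy_succ (G : TemporalGraph) (u t z : ℕ) :
    G.reachesBy u (t + 1) z ↔
      (G.reachesBy u t z ∨ ∃ w, G.reachesBy u t w ∧ s(w, z) ∈ G.layer (t + 1)) := Iff.rfl

lemma reachesBy_mono (G : TemporalGraph) {u t t' z : ℕ} (h : t ≤ t')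
    (hr : G.reachesBy u t z) : G.reachesBy u t' z := by
  induction t', h using Nat.le_induction with
  | base => exact hr
  | succ t' h ih => exact Or.inl ih

lemma D_le (G : TemporalGraph) (hP : G.IsPath) (u : ℕ) :
    ∀ t z, G.reachesBy u t z → D G u z ≤ t := by
  intro t
  induction t with
  | zero =>
    intro z h
    rw [reachesBy_zero] at h
    subst h
    rw [D_eq_zero G le_rfl]
  | succ t ih =>
    intro z h
    rw [reachesBy_succ] at h
    rcases h with h | ⟨w', hw', hedge⟩
    · exact le_trans (ih z h) (Nat.le_succ t)
    · have hund := layer_subset_underlying G (by omega) hedge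
      rw [hP.2, pathEdges] at hund
      obtain ⟨i, hi, heq⟩ := Finset.mem_image.mp hund
      rw [Sym2.eq_iff] at heq
      rcases heq with ⟨h1, h2⟩ | ⟨h1, h2⟩
      · subst h1; subst h2
        by_cases hz : i + 1 ≤ u
        · rw [D_eq_zero G hz]; exact Nat.zero_le _
        · rw [D_succ_of_le G (by omega)]
          exact Nat.max_le.mpr ⟨by have := ih i hw'; omega,
            fa_le_of_mem_layer G hedge (by omega)⟩
      · exact le_trans (le_trans (D_mono G u (by omega : z ≤ w')) (ih w' hw'))
          (Nat.le_succ t)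

lemma reachesBy_D (G : TemporalGraph) (hP : G.IsPath) (hMG : G.Growing)
    {u : ℕ} (hu : 1 ≤ u) : ∀ z, u ≤ z → z ≤ G.n → G.reachesBy u (D G u z) z := by
  intro z hz
  induction z, hz using Nat.le_induction with
  | base =>
    intro _
    rw [D_eq_zero G le_rfl, reachesBy_zero]
  | succ z hz ih =>
    intro hzn
    have hund : s(z, z + 1) ∈ G.underlying :=
      edge_mem_underlying G hP (le_trans hu hz) hzn
    have hD : D G u (z + 1) = max (D G u z + 1) (fa G z) := D_succ_of_le G hz
    have h1 : D G u z + 1 ≤ D G u (z + 1) := hD ▸ le_max_left _ _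
    have h2 : fa G z ≤ D G u (z + 1) := hD ▸ le_max_right _ _
    obtain ⟨T, hT⟩ : ∃ T, D G u (z + 1) = T + 1 := ⟨D G u (z + 1) - 1, by omega⟩
    rw [hT, reachesBy_succ]
    refine Or.inr ⟨z, reachesBy_mono G (by omega) (ih (by omega)), ?_⟩
    rw [← hT]
    exact edge_mem_layer G hMG hund h2

lemma td_eq (G : TemporalGraph) (hP : G.IsPath) (hMG : G.Growing)
    {u z : ℕ} (hu : 1 ≤ u) (hz : u ≤ z) (hzn : z ≤ G.n) :
    G.td u z = (D G u z : ℕ∞) := by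
  rw [td]
  apply le_antisymm
  · exact sInf_le ⟨D G u z, rfl, reachesBy_D G hP hMG hu z hz hzn⟩
  · apply le_sInf
    rintro t ⟨k, rfl, hk⟩
    exact_mod_cast D_le G hP u k z hk

end Stmt17Aux

open Stmt17Aux

/-- On a monotonically growing temporal path, for vertices
`v < w < x`: `td(v, x) = td(w, x)` iff there is a right boundary `r` of `v`
with `w ≤ r < x`. -/
theorem stmt17 (G : TemporalGraph) (hP : G.IsPath) (hMG : G.Growing)
    (v w x : ℕ) (hv : v ∈ G.V) (hw : w ∈ G.V) (hx : x ∈ G.V)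
    (hvw : v < w) (hwx : w < x) :
    G.td v x = G.td w x ↔ ∃ r : ℕ, G.IsRightBoundary v r ∧ w ≤ r ∧ r < x := by
  rw [TemporalGraph.V, Finset.mem_Icc] at hv hw hx
  have htdv : G.td v x = (D G v x : ℕ∞) := td_eq G hP hMG hv.1 (by omega) hx.2
  have htdw : G.td w x = (D G w x : ℕ∞) := td_eq G hP hMG hw.1 (by omega) hx.2
  constructor
  · intro h
    by_contra hno
    have key : ∀ b, w ≤ b → b ≤ x → D G w b < D G v b := by
      intro b hb
      induction b, hb using Nat.le_induction with
      | base =>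
        intro _
        rw [D_eq_zero G le_rfl]
        exact D_pos G hvw
      | succ b hb ih =>
        intro hbx
        have hbx' : b < x := by omega
        have hund : s(b, b + 1) ∈ G.underlying :=
          edge_mem_underlying G hP (by omega) (by omega)
        have hnb : ¬ G.td v b < G.firstAppear s(b, b + 1) := by
          intro hlt
          exact hno ⟨b, ⟨by omega, by rw [TemporalGraph.V, Finset.mem_Icc]; omega, hlt⟩,
            hb, hbx'⟩
        have hfa : fa G b ≤ D G v b := by
          rw [td_eq G hP hMG hv.1 (by omega) (by omega), firstAppear_eq G hund] at hnb
          exact_mod_cast not_lt.mp hnb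
        have ihb := ih (by omega)
        rw [D_succ_of_le G hb, D_succ_of_le G (by omega : v ≤ b),
          max_eq_left (by omega : fa G b ≤ D G v b + 1)]
        exact max_lt (by omega) (by omega)
    have hlt := key x (le_of_lt hwx) le_rfl
    rw [htdv, htdw] at h
    have : D G v x = D G w x := by exact_mod_cast h
    omega
  · rintro ⟨r, ⟨hvr, hrV, hlt⟩, hwr, hrx⟩
    have hund : s(r, r + 1) ∈ G.underlying :=
      edge_mem_underlying G hP (by omega) (by omega)
    rw [td_eq G hP hMG hv.1 hvr (by omega), firstAppear_eq G hund] at hlt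
    have hfar : D G v r < fa G r := by exact_mod_cast hlt
    have hsm : D G w r ≤ D G v r := D_source_mono G (le_of_lt hvw) r
    have key : ∀ b, r + 1 ≤ b → b ≤ x → D G v b = D G w b := by
      intro b hb
      induction b, hb using Nat.le_induction with
      | base =>
        intro _
        rw [D_succ_of_le G (by omega : v ≤ r), D_succ_of_le G hwr,
          max_eq_right (by omega : D G v r + 1 ≤ fa G r),
          max_eq_right (by omega : D G w r + 1 ≤ fa G r)]
      | succ b hb ih =>
        intro hbx
        rw [D_succ_of_le G (by omega : v ≤ b), D_succ_of_le G (by omega : w ≤ b),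
          ih (by omega)]
    rw [htdv, htdw, key x (by omega) le_rfl]
end

section
/- Let P = ([n], E_1, …, E_τ) be a monotonically growing temporal path and let a < b < c be vertices in [n]. If c is a right boundary of a, then c is also a right boundary of b. -/
open Finset

open TemporalGraph

/-- On a monotonically growing temporal path, for vertices
`a < b < c`: if `c` is a right boundary of `a`, then `c` is a right boundary
of `b`. -/
theorem stmt18 (G : TemporalGraph) (hP : G.IsPath) (hMG : G.Growing)
    (a b c : ℕ) (ha : a ∈ G.V) (hb : b ∈ G.V) (hc : c ∈ G.V)
    (hab : a < b) (hbc : b < c)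
    (h : G.IsRightBoundary a c) :
    G.IsRightBoundary b c := by
  obtain ⟨_, _, hlt⟩ := h
  refine ⟨hbc.le, hc, lt_of_le_of_lt ?_ hlt⟩
  -- td(b,c) ≤ td(a,c)
  have hself : ∀ k, G.reachesBy b k b := by
    intro k
    induction k with
    | zero => rfl
    | succ k ih => exact Or.inl ih
  have hlayer : ∀ t : ℕ, G.layer (t + 1) ⊆ G.underlying := by
    intro t e he
    unfold layer at he
    split at he
    · exact Finset.mem_biUnion.2 ⟨t + 1, Finset.mem_Icc.2 ⟨Nat.succ_le_succ (Nat.zero_le _), by omega⟩, he⟩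
    · exact Finset.mem_biUnion.2 ⟨G.tau, Finset.mem_Icc.2 ⟨G.htau, le_rfl⟩, he⟩
  have key : ∀ k v, b ≤ v → G.reachesBy a k v → G.reachesBy b k v := by
    intro k
    induction k with
    | zero =>
      intro v hv h0
      have : v = a := h0
      omega
    | succ k ih =>
      intro v hv h1
      rcases h1 with h1 | ⟨w, hw, hedge⟩
      · exact Or.inl (ih v hv h1)
      · have hmem : s(w, v) ∈ pathEdges G.n := by
          rw [← hP.2]; exact hlayer k hedge
        obtain ⟨i, hi, hpe⟩ := Finset.mem_image.1 hmem
        have hwv : (w = i ∧ v = i + 1) ∨ (w = i + 1 ∧ v = i) := by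
          rw [Sym2.eq_iff] at hpe
          tauto
        by_cases hbw : b ≤ w
        · exact Or.inr ⟨w, ih w hbw hw, hedge⟩
        ·
          have : v = b := by omega
          subst this
          exact Or.inl (hself k)
  refine sInf_le_sInf ?_
  rintro t ⟨k, rfl, hk⟩
  exact ⟨k, rfl, key k c hbc.le hk⟩
end

section
/- Let P = ([n], E_1, …, E_τ) be a monotonically growing temporal path and let a < b < c be vertices in [n]. If c is a right boundary of both a and b, then for every vertex d ∈ [n] with d > c, the vertex d is a right boundary of a if and only if d is a right boundary of b; moreover td(a, d) = td(b, d) for all d > c. -/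
open Finset

open TemporalGraph

lemma myReachesBy_self (G : TemporalGraph) (u : ℕ) : ∀ t, G.reachesBy u t u
  | 0 => rfl
  | t + 1 => Or.inl (myReachesBy_self G u t)

lemma myReachesBy_mono (G : TemporalGraph) (u v : ℕ) {t t' : ℕ} (h : t ≤ t')
    (hr : G.reachesBy u t v) : G.reachesBy u t' v := by
  induction t' with
  | zero =>
    have ht0 : t = 0 := by omega
    subst ht0; exact hr
  | succ t' ih =>
    rcases Nat.lt_or_ge t (t' + 1) with h' | h'
    · exact Or.inl (ih (by omega))
    · have : t = t' + 1 := by omega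
      subst this; exact hr

lemma myLayer_edge (G : TemporalGraph) (hP : G.IsPath) {w v t : ℕ} (ht : 1 ≤ t)
    (h : s(w, v) ∈ G.layer t) : v = w + 1 ∨ w = v + 1 := by
  have hsub : G.layer t ⊆ G.underlying := by
    unfold TemporalGraph.layer
    split
    · intro e he
      exact Finset.mem_biUnion.mpr ⟨t, Finset.mem_Icc.mpr ⟨ht, by assumption⟩, he⟩
    · intro e he
      exact Finset.mem_biUnion.mpr ⟨G.tau, Finset.mem_Icc.mpr ⟨G.htau, le_rfl⟩, he⟩
  have hmem := hsub h
  rw [hP.2] at hmem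
  unfold TemporalGraph.pathEdges at hmem
  obtain ⟨i, _, heq⟩ := Finset.mem_image.mp hmem
  rw [Sym2.eq_iff] at heq
  rcases heq with ⟨h1, h2⟩ | ⟨h1, h2⟩ <;> omega

lemma myFirstAppear_le (G : TemporalGraph) {e : Sym2 ℕ} {s : ℕ} (hs : 1 ≤ s)
    (h : e ∈ G.layer s) : G.firstAppear e ≤ (s : ℕ∞) := by
  unfold TemporalGraph.layer at h
  split at h
  · exact sInf_le ⟨s, rfl, hs, by assumption, h⟩
  · refine le_trans (sInf_le ⟨G.tau, rfl, G.htau, le_rfl, h⟩) ?_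
    exact_mod_cast Nat.le_of_lt (by omega)

lemma myReachesBy_of_td_lt (G : TemporalGraph) {u v : ℕ} {s : ℕ}
    (h : G.td u v < (s : ℕ∞)) : ∃ k, k < s ∧ G.reachesBy u k v := by
  obtain ⟨t, ht, hlt⟩ := sInf_lt_iff.mp h
  obtain ⟨k, rfl, hk⟩ := ht
  exact ⟨k, by exact_mod_cast hlt, hk⟩

lemma myReachesBy_ge (G : TemporalGraph) (hP : G.IsPath) {a b : ℕ} (hab : a ≤ b) :
    ∀ t d, G.reachesBy a t d → b ≤ d → G.reachesBy b t d := by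
  intro t
  induction t with
  | zero =>
    intro d h hbd
    have hda : d = a := h
    have : d = b := by omega
    subst this
    exact myReachesBy_self G d 0
  | succ t ih =>
    intro d h hbd
    rcases h with h | ⟨w, hw, he⟩
    · exact Or.inl (ih d h hbd)
    · have hedge := myLayer_edge G hP (by omega) he
      by_cases hbw : b ≤ w
      · exact Or.inr ⟨w, ih w hw hbw, he⟩
      · have : d = b := by omega
        subst this
        exact myReachesBy_self G d (t + 1)

lemma myReachesBy_cross (G : TemporalGraph) (hP : G.IsPath) {a b c : ℕ}
    (hbc : b ≤ c)
    (Hcross : ∀ t : ℕ, s(c, c + 1) ∈ G.layer (t + 1) → G.reachesBy a t c) :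
    ∀ t d, G.reachesBy b t d → c < d → G.reachesBy a t d := by
  intro t
  induction t with
  | zero =>
    intro d h hcd
    have hdb : d = b := h
    omega
  | succ t ih =>
    intro d h hcd
    rcases h with h | ⟨w, hw, he⟩
    · exact Or.inl (ih d h hcd)
    · have hedge := myLayer_edge G hP (by omega) he
      by_cases hcw : c < w
      · exact Or.inr ⟨w, ih w hw hcw, he⟩
      · have hwc : w = c ∧ d = c + 1 := by omega
        obtain ⟨h1, h2⟩ := hwc
        subst h1; subst h2
        exact Or.inr ⟨w, Hcross t he, he⟩

/-- On a monotonically growing temporal path, for vertices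
`a < b < c`: if `c` is a right boundary of both `a` and `b`, then every vertex
`d > c` is a right boundary of `a` iff it is a right boundary of `b`; moreover
`td(a, d) = td(b, d)` for all such `d`. -/
theorem stmt19 (G : TemporalGraph) (hP : G.IsPath) (hMG : G.Growing)
    (a b c : ℕ) (ha : a ∈ G.V) (hb : b ∈ G.V) (hc : c ∈ G.V)
    (hab : a < b) (hbc : b < c)
    (hca : G.IsRightBoundary a c) (hcb : G.IsRightBoundary b c) :
    ∀ d ∈ G.V, c < d →
      (G.IsRightBoundary a d ↔ G.IsRightBoundary b d) ∧ G.td a d = G.td b d := by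
  intro d hd hcd
  have Hcross : ∀ t : ℕ, s(c, c + 1) ∈ G.layer (t + 1) → G.reachesBy a t c := by
    intro t he
    have h1 : G.firstAppear s(c, c + 1) ≤ ((t + 1 : ℕ) : ℕ∞) :=
      myFirstAppear_le G (by omega) he
    have h2 : G.td a c < ((t + 1 : ℕ) : ℕ∞) := lt_of_lt_of_le hca.2.2 h1
    obtain ⟨k, hk, hr⟩ := myReachesBy_of_td_lt G h2
    exact myReachesBy_mono G a c (by omega) hr
  have hiff : ∀ t, G.reachesBy a t d ↔ G.reachesBy b t d := fun t =>
    ⟨fun h => myReachesBy_ge G hP (le_of_lt hab) t d h (by omega),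
     fun h => myReachesBy_cross G hP (le_of_lt hbc) Hcross t d h hcd⟩
  have htd : G.td a d = G.td b d := by
    unfold TemporalGraph.td
    congr 1
    ext t
    simp only [Set.mem_setOf_eq]
    constructor <;> rintro ⟨k, rfl, hk⟩
    · exact ⟨k, rfl, (hiff k).mp hk⟩
    · exact ⟨k, rfl, (hiff k).mpr hk⟩
  refine ⟨?_, htd⟩
  unfold TemporalGraph.IsRightBoundary
  rw [htd]
  constructor <;> rintro ⟨_, h2, h3⟩ <;> exact ⟨by omega, h2, h3⟩
end
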